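/- Let Q ⊆ ℝ² be a compact convex set with μ(Q) > 0, let W ⊆ Q be a finite nonempty set with |W| = n, and suppose every Voronoi cell C(w), w ∈ W, is point symmetric about some point. If there exists w ∈ W such that C(w) is not point symmetric about w itself (i.e., some q satisfies q ∈ C(w) but 2w − q ∉ C(w)), then there exists a finite set B ⊆ Q with |B| = n such that μ({q ∈ Q : infDist(q, B) < infDist(q, W)}) > μ(Q)/2. (If Wilma's points are not all at the symmetry centers of their cells, Barney wins.) -/

import Mathlib

/-!
Barney places one point in each Voronoi cell. If `C(w)` is symmetric about `w`, the point
`w + t v` claims the part of `C(w)` beyond the bisector of `w` and `w + t v`; as `t → 0` this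
increases to the open half of `C(w)` on the side of `v`, which has measure `μ(C(w))/2` because
`C(w)` is symmetric about `w` and the line through `w` is null. If `C(w)` is symmetric about
`c ≠ w`, the point `c` claims the half of `C(w)` beyond the line through `c` together with a slab
on the other side of that line; the slab has positive measure because the centre of a convex
symmetric set with nonempty interior is an interior point. Cells overlap only in null sets, so
summing over cells gives Barney more than `μ(Q)/2`, and further points of the infinite board
fill his set up to `n` points.
-/

open MeasureTheory Metric Set Filter Topology
open scoped ENNReal RealInnerProductSpace

/-- The Voronoi cell of `w` in the board `Q` with respect to the site set `W`:
the points of `Q` at least as close to `w` as to every other site. -/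
def cell (Q W : Set (EuclideanSpace ℝ (Fin 2))) (w : EuclideanSpace ℝ (Fin 2)) :
    Set (EuclideanSpace ℝ (Fin 2)) :=
  {q | q ∈ Q ∧ ∀ w' ∈ W, dist q w ≤ dist q w'}

/-- A set `C` is point symmetric about `c` if it is invariant under the point
reflection `q ↦ 2c − q`. -/
def PointSymmetricAbout (C : Set (EuclideanSpace ℝ (Fin 2)))
    (c : EuclideanSpace ℝ (Fin 2)) : Prop :=
  ∀ q, q ∈ C ↔ (2 : ℝ) • c - q ∈ C

section InnerProductSpace

variable {E : Type*} [NormedAddCommGroup E] [InnerProductSpace ℝ E]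

theorem dist_sq_eq_dist_sq_sub_inner (q w b : E) :
    dist q b ^ 2 = dist q w ^ 2 - 2 * ⟪b - w, q - w⟫ + ‖b - w‖ ^ 2 := by
  rw [dist_eq_norm, dist_eq_norm, real_inner_comm, ← norm_sub_sq_real, sub_sub_sub_cancel_right]

theorem dist_lt_dist_iff_inner (q w b : E) :
    dist q b < dist q w ↔ ‖b - w‖ ^ 2 / 2 < ⟪b - w, q - w⟫ := by
  rw [← pow_lt_pow_iff_left₀ dist_nonneg dist_nonneg two_ne_zero,
    dist_sq_eq_dist_sq_sub_inner q w b]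
  constructor <;> intro h <;> linarith

theorem dist_le_dist_iff_inner (q w b : E) :
    dist q w ≤ dist q b ↔ ⟪b - w, q - w⟫ ≤ ‖b - w‖ ^ 2 / 2 := by
  rw [← not_lt, dist_lt_dist_iff_inner, not_lt]

theorem dist_eq_dist_iff_inner (q w b : E) :
    dist q b = dist q w ↔ ⟪b - w, q - w⟫ = ‖b - w‖ ^ 2 / 2 := by
  rw [← sq_eq_sq₀ dist_nonneg dist_nonneg, dist_sq_eq_dist_sq_sub_inner q w b]
  constructor <;> intro h <;> linarith

theorem dist_add_smul_lt_dist_iff {t : ℝ} (ht : 0 < t) (q w v : E) :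
    dist q (w + t • v) < dist q w ↔ t * ‖v‖ ^ 2 / 2 < ⟪v, q - w⟫ := by
  rw [dist_lt_dist_iff_inner, add_sub_cancel_left, norm_smul, real_inner_smul_left,
    Real.norm_of_nonneg ht.le, mul_pow, sq t, mul_assoc, mul_div_assoc, mul_div_assoc,
    mul_lt_mul_iff_right₀ ht]

theorem convex_setOf_dist_le_dist (w b : E) : Convex ℝ {q | dist q w ≤ dist q b} := by
  simp only [dist_le_dist_iff_inner, inner_sub_right, sub_le_iff_le_add]
  exact convex_halfSpace_le (innerₛₗ ℝ (b - w)).isLinear _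

variable [FiniteDimensional ℝ E] [MeasurableSpace E] [BorelSpace E]

theorem addHaar_setOf_inner_eq (μ : Measure E) [μ.IsAddHaarMeasure] {v : E} (hv : v ≠ 0)
    (a : ℝ) : μ {q | ⟪v, q⟫ = a} = 0 := by
  rcases eq_empty_or_nonempty {q | ⟪v, q⟫ = a} with h | ⟨p, hp⟩
  · rw [h, measure_empty]
  refine measure_mono_null (fun q hq => ?_) (Measure.addHaar_affineSubspace μ
    (AffineSubspace.mk' p (LinearMap.ker (innerₛₗ ℝ v))) fun h => hv ?_)
  · rw [SetLike.mem_coe, AffineSubspace.mem_mk', vsub_eq_sub, LinearMap.mem_ker,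
      innerₛₗ_apply_apply, inner_sub_right, hq, hp, sub_self]
  · have hvker : v ∈ LinearMap.ker (innerₛₗ ℝ v) := by
      rw [← AffineSubspace.direction_mk' p (LinearMap.ker _), h, AffineSubspace.direction_top]
      exact Submodule.mem_top
    simpa using hvker

theorem Convex.interior_nonempty_of_addHaar_pos (μ : Measure E) [μ.IsAddHaarMeasure]
    {s : Set E} (hs : Convex ℝ s) (h : 0 < μ s) : (interior s).Nonempty := by
  by_contra hint
  rw [not_nonempty_iff_eq_empty] at hint
  refine h.ne' (measure_mono_null (fun q hq => ?_) (hs.addHaar_frontier μ))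
  exact ⟨subset_closure hq, by simp [hint]⟩

end InnerProductSpace

local notation "E2" => EuclideanSpace ℝ (Fin 2)

section PointSymmetric

variable {C : Set E2} {c : E2}

theorem pointSymmetricAbout_ball (c : E2) (r : ℝ) : PointSymmetricAbout (ball c r) c := by
  intro q
  rw [mem_ball, mem_ball, dist_eq_norm, dist_eq_norm, two_smul, add_sub_assoc, add_sub_cancel_left,
    norm_sub_rev]

theorem PointSymmetricAbout.mem_interior (hsym : PointSymmetricAbout C c) (hC : Convex ℝ C)
    (hint : (interior C).Nonempty) : c ∈ interior C := by
  obtain ⟨x, hx⟩ := hint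
  refine hC.openSegment_interior_self_subset_interior hx ((hsym x).1 (interior_subset hx))
    ⟨1 / 2, 1 / 2, by norm_num, by norm_num, by norm_num, ?_⟩
  module

theorem PointSymmetricAbout.volume_le_two_mul (hsym : PointSymmetricAbout C c) {v : E2}
    (hv : v ≠ 0) : volume C ≤ 2 * volume (C ∩ {q | 0 < ⟪v, q - c⟫}) := by
  set P := C ∩ {q | 0 < ⟪v, q - c⟫}
  have hreflect : (fun q => (2 : ℝ) • c - q) ⁻¹' P = C ∩ {q | ⟪v, q - c⟫ < 0} := by
    ext q
    have : (2 : ℝ) • c - q - c = -(q - c) := by module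
    simp only [P, mem_preimage, mem_inter_iff, mem_ofPred_eq, this, inner_neg_right, neg_pos,
      ← hsym q]
  have hnull : volume {q : E2 | ⟪v, q - c⟫ = 0} = 0 := by
    simpa only [inner_sub_right, sub_eq_zero] using addHaar_setOf_inner_eq volume hv ⟪v, c⟫
  have hcover : C ⊆ P ∪ (fun q => (2 : ℝ) • c - q) ⁻¹' P ∪ {q | ⟪v, q - c⟫ = 0} := by
    intro q hq
    rw [hreflect]
    rcases lt_trichotomy ⟪v, q - c⟫ 0 with h | h | h
    exacts [Or.inl (Or.inr ⟨hq, h⟩), Or.inr h, Or.inl (Or.inl ⟨hq, h⟩)]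
  calc volume C
      ≤ volume (P ∪ (fun q => (2 : ℝ) • c - q) ⁻¹' P) + 0 := by
        rw [← hnull]; exact (measure_mono hcover).trans (measure_union_le _ _)
    _ ≤ volume P + volume P := by
        rw [add_zero]
        refine (measure_union_le _ _).trans_eq ?_
        rw [(Measure.measurePreserving_sub_left volume _).measure_preimage_emb
          (measurableEmbedding_subLeft _)]
    _ = 2 * volume P := (two_mul _).symm

end PointSymmetric

section Cells

theorem cell_eq_inter_biInter (Q W : Set E2) (w : E2) :
    cell Q W w = Q ∩ ⋂ w' ∈ W, {q | dist q w ≤ dist q w'} := by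
  ext q; simp [cell]

theorem cell_subset (Q W : Set E2) (w : E2) : cell Q W w ⊆ Q := fun _ hq => hq.1

theorem IsClosed.cell {Q : Set E2} (hQ : IsClosed Q) (W : Set E2) (w : E2) :
    IsClosed (cell Q W w) := by
  rw [cell_eq_inter_biInter]
  exact hQ.inter (isClosed_biInter fun w' _ => _root_.isClosed_le (by fun_prop) (by fun_prop))

theorem Convex.cell {Q : Set E2} (hQ : Convex ℝ Q) (W : Set E2) (w : E2) :
    Convex ℝ (cell Q W w) := by
  rw [cell_eq_inter_biInter]
  exact hQ.inter (convex_iInter₂ fun w' _ => convex_setOf_dist_le_dist w w')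

variable {Q W : Set E2} {w : E2}

theorem infDist_eq_dist_of_mem_cell (hw : w ∈ W) {q : E2} (hq : q ∈ cell Q W w) :
    infDist q W = dist q w :=
  le_antisymm (infDist_le_dist_of_mem hw) ((le_infDist ⟨w, hw⟩).2 hq.2)

theorem aedisjoint_cell {w' : E2} (hw : w ∈ W) (hw' : w' ∈ W) (hne : w ≠ w') :
    AEDisjoint volume (cell Q W w) (cell Q W w') := by
  refine measure_mono_null (fun q hq => ?_)
    (addHaar_setOf_inner_eq volume (sub_ne_zero.2 hne.symm) (⟪w' - w, w⟫ + ‖w' - w‖ ^ 2 / 2))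
  have h := (dist_eq_dist_iff_inner q w w').1 (le_antisymm (hq.2.2 w hw) (hq.1.2 w' hw'))
  rw [inner_sub_right] at h
  rw [mem_ofPred_eq, ← h]
  ring

theorem exists_ball_inter_subset_cell (hWfin : W.Finite) (Q : Set E2) (w : E2) :
    ∃ r > 0, ball w r ∩ Q ⊆ cell Q W w := by
  obtain ⟨ε, hε, hball⟩ := Metric.isOpen_iff.1 (hWfin.sdiff (t := {w})).isClosed.isOpen_compl w
    (fun h => h.2 rfl)
  refine ⟨ε / 2, half_pos hε, fun q ⟨hqw, hq⟩ => ⟨hq, fun w' hw' => ?_⟩⟩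
  rcases eq_or_ne w' w with rfl | hne
  · exact le_rfl
  have hfar : ε ≤ dist w' w := not_lt.1 fun h => hball h ⟨hw', hne⟩
  rw [mem_ball] at hqw
  linarith [dist_triangle w' q w, dist_comm q w']

theorem interior_cell_nonempty (hQconv : Convex ℝ Q) (hQint : (interior Q).Nonempty)
    (hWfin : W.Finite) (hwQ : w ∈ Q) : (interior (cell Q W w)).Nonempty := by
  obtain ⟨r, hr, hsub⟩ := exists_ball_inter_subset_cell hWfin Q w
  have hw : w ∈ closure (interior Q) := by
    rw [hQconv.closure_interior_eq_closure_of_nonempty_interior hQint]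
    exact subset_closure hwQ
  obtain ⟨y, hy, hwy⟩ := Metric.mem_closure_iff.1 hw r hr
  refine ⟨y, interior_mono hsub ?_⟩
  rw [interior_inter, isOpen_ball.interior_eq]
  exact ⟨mem_ball'.2 hwy, hy⟩

end Cells

theorem tendsto_measure_inter_setOf_lt {α : Type*} [MeasurableSpace α] (μ : Measure α)
    (s : Set α) (g : α → ℝ) {ε : ℕ → ℝ} (hε : Antitone ε) (hε0 : Tendsto ε atTop (𝓝 0))
    (hεnonneg : ∀ m, 0 ≤ ε m) :
    Tendsto (fun m => μ (s ∩ {x | ε m < g x})) atTop (𝓝 (μ (s ∩ {x | 0 < g x}))) := by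
  have hunion : ⋃ m, s ∩ {x | ε m < g x} = s ∩ {x | 0 < g x} := by
    ext x
    simp only [mem_iUnion, mem_inter_iff, mem_ofPred_eq]
    refine ⟨fun ⟨m, hx, hm⟩ => ⟨hx, (hεnonneg m).trans_lt hm⟩, fun ⟨hx, hgx⟩ => ?_⟩
    obtain ⟨m, hm⟩ := (hε0.eventually_lt_const hgx).exists
    exact ⟨m, hx, hm⟩
  rw [← hunion]
  exact tendsto_measure_iUnion_atTop fun m n hmn =>
    inter_subset_inter_right s fun x hx => (hε hmn).trans_lt hx

section Claim

variable {C : Set E2} {c w : E2}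

theorem PointSymmetricAbout.tendsto_volume_claim (hsym : PointSymmetricAbout C w) {v : E2}
    (hv : v ≠ 0) : ∃ L, Tendsto (fun m : ℕ =>
      volume (C ∩ {q | dist q (w + (1 / ((m : ℝ) + 1)) • v) < dist q w})) atTop (𝓝 L) ∧
      volume C ≤ 2 * L := by
  refine ⟨_, ?_, hsym.volume_le_two_mul hv⟩
  have hε : Tendsto (fun m : ℕ => 1 / ((m : ℝ) + 1) * ‖v‖ ^ 2 / 2) atTop (𝓝 0) := by
    simpa using (tendsto_one_div_add_atTop_nhds_zero_nat.mul_const (‖v‖ ^ 2)).div_const 2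
  simp_rw [dist_add_smul_lt_dist_iff Nat.one_div_pos_of_nat _ w v]
  exact tendsto_measure_inter_setOf_lt volume C (fun q => ⟪v, q - w⟫)
    (fun m n hmn => by gcongr) hε fun m => by positivity

theorem PointSymmetricAbout.volume_lt_two_mul_claim (hsym : PointSymmetricAbout C c)
    (hc : c ∈ interior C) (hC : volume C ≠ ∞) (hcw : c ≠ w) :
    volume C < 2 * volume (C ∩ {q | dist q c < dist q w}) := by
  set v := c - w
  have hv : v ≠ 0 := sub_ne_zero.2 hcw
  have hclaim : ∀ q, -(‖v‖ ^ 2 / 2) < ⟪v, q - c⟫ → dist q c < dist q w := by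
    intro q hq
    rw [dist_lt_dist_iff_inner, ← sub_add_sub_cancel q c w, inner_add_right,
      real_inner_self_eq_norm_sq]
    linarith
  obtain ⟨r, hr, hball⟩ := Metric.mem_nhds_iff.1 (mem_interior_iff_mem_nhds.1 hc)
  set s := min r (‖v‖ / 2)
  have hs : 0 < s := lt_min hr (half_pos (norm_pos_iff.2 hv))
  set P := C ∩ {q | 0 < ⟪v, q - c⟫}
  set N := ball c s ∩ {q | 0 < ⟪-v, q - c⟫}
  have hPN : P ∪ N ⊆ C ∩ {q | dist q c < dist q w} := by
    refine union_subset (fun q ⟨hq, hpos⟩ => ⟨hq, hclaim q (by linarith [hpos.out, sq_nonneg ‖v‖])⟩)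
      fun q ⟨hq, _⟩ => ⟨hball (ball_subset_ball (min_le_left _ _) hq), hclaim q ?_⟩
    have hle := neg_le_of_abs_le (abs_real_inner_le_norm v (q - c))
    have hqc : ‖q - c‖ < ‖v‖ / 2 := (mem_ball_iff_norm.1 hq).trans_le (min_le_right _ _)
    nlinarith [mul_lt_mul_of_pos_left hqc (norm_pos_iff.2 hv)]
  have hdisj : Disjoint P N := disjoint_left.2 fun q hP hN => by
    have := hN.2
    rw [mem_ofPred_eq, inner_neg_left] at this
    linarith [hP.2.out]
  have hNmeas : MeasurableSet N :=
    (isOpen_ball.inter (isOpen_lt continuous_const (by fun_prop))).measurableSet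
  have hNpos : volume N ≠ 0 := by
    intro h
    have := (pointSymmetricAbout_ball c s).volume_le_two_mul (neg_ne_zero.2 hv)
    rw [h, mul_zero, nonpos_iff_eq_zero] at this
    exact (measure_ball_pos volume c hs).ne' this
  have hPfin : 2 * volume P ≠ ∞ :=
    ENNReal.mul_ne_top ENNReal.ofNat_ne_top
      (ne_top_of_le_ne_top hC (measure_mono inter_subset_left))
  calc volume C ≤ 2 * volume P := hsym.volume_le_two_mul hv
    _ < 2 * volume P + 2 * volume N := ENNReal.lt_add_right hPfin (mul_ne_zero two_ne_zero hNpos)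
    _ = 2 * volume (P ∪ N) := by rw [measure_union hdisj hNmeas, mul_add]
    _ ≤ 2 * volume (C ∩ {q | dist q c < dist q w}) := by gcongr

end Claim

theorem ENNReal.sum_lt_sum {ι : Type*} {s : Finset ι} {f g : ι → ℝ≥0∞}
    (hf : ∑ i ∈ s, f i ≠ ∞) (hle : ∀ i ∈ s, f i ≤ g i) (hlt : ∃ i ∈ s, f i < g i) :
    ∑ i ∈ s, f i < ∑ i ∈ s, g i := by
  classical
  obtain ⟨i, hi, hfg⟩ := hlt
  rw [← Finset.add_sum_erase s f hi, ← Finset.add_sum_erase s g hi]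
  refine ENNReal.add_lt_add_of_lt_of_le
    (ne_top_of_le_ne_top hf (Finset.sum_le_sum_of_subset (Finset.erase_subset i s))) hfg
    (Finset.sum_le_sum fun j hj => hle j (Finset.mem_of_mem_erase hj))

section Game

variable {Q W : Set E2}

theorem volume_le_sum_volume_cell (hWfin : W.Finite) (hWne : W.Nonempty) :
    volume Q ≤ ∑ w ∈ hWfin.toFinset, volume (cell Q W w) := by
  refine (measure_mono fun q hq => ?_).trans (measure_biUnion_finset_le _ _)
  obtain ⟨w, hw, hmin⟩ := exists_min_image W (dist q) hWfin hWne
  exact mem_biUnion (hWfin.mem_toFinset.2 hw) ⟨hq, hmin⟩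

theorem sum_volume_claim_le (hQ : IsClosed Q) (hWfin : W.Finite) {b : E2 → E2} {B : Set E2}
    (hB : ∀ w ∈ W, b w ∈ B) :
    ∑ w ∈ hWfin.toFinset, volume (cell Q W w ∩ {q | dist q (b w) < dist q w}) ≤
      volume {q | q ∈ Q ∧ infDist q B < infDist q W} := by
  rw [← measure_biUnion_finset₀]
  · refine measure_mono fun q hq => ?_
    obtain ⟨w, hw, hqw, hlt⟩ := mem_iUnion₂.1 hq
    rw [Finite.mem_toFinset] at hw
    exact ⟨hqw.1, (infDist_le_dist_of_mem (hB w hw)).trans_lt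
      (hlt.trans_eq (infDist_eq_dist_of_mem_cell hw hqw).symm)⟩
  · intro w hw w' hw' hne
    rw [Finset.mem_coe, Finite.mem_toFinset] at hw hw'
    exact (aedisjoint_cell hw hw' hne).mono inter_subset_left inter_subset_left
  · exact fun w _ => ((hQ.cell W w).measurableSet.inter
      (measurableSet_lt (by fun_prop) (by fun_prop))).nullMeasurableSet

theorem exists_tendsto_volume_claim_cell (hQconv : Convex ℝ Q) (hQint : (interior Q).Nonempty)
    (hQnt : Q.Nontrivial) (hQ : volume Q ≠ ∞) (hWfin : W.Finite) {w c : E2} (hwQ : w ∈ Q)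
    (hsym : PointSymmetricAbout (cell Q W w) c) :
    ∃ (b : ℕ → E2) (L : ℝ≥0∞), (∀ m, b m ∈ Q) ∧
      Tendsto (fun m => volume (cell Q W w ∩ {q | dist q (b m) < dist q w})) atTop (𝓝 L) ∧
      volume (cell Q W w) ≤ 2 * L ∧ (c ≠ w → volume (cell Q W w) < 2 * L) := by
  rcases eq_or_ne c w with rfl | hcw
  · obtain ⟨x, hxQ, hxc⟩ := hQnt.exists_ne c
    obtain ⟨L, hL, hle⟩ := hsym.tendsto_volume_claim (sub_ne_zero.2 hxc)
    refine ⟨_, L, fun m => hQconv.add_smul_sub_mem hwQ hxQ ⟨?_, ?_⟩, hL, hle, absurd rfl⟩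
    · positivity
    · exact div_le_one_of_le₀ (by linarith [m.cast_nonneg (α := ℝ)]) (by positivity)
  · have hc : c ∈ interior (cell Q W w) :=
      hsym.mem_interior (hQconv.cell W w) (interior_cell_nonempty hQconv hQint hWfin hwQ)
    have hlt := hsym.volume_lt_two_mul_claim hc
      (ne_top_of_le_ne_top hQ (measure_mono (cell_subset Q W w))) hcw
    exact ⟨fun _ => c, _, fun _ => cell_subset Q W w (interior_subset hc), tendsto_const_nhds,
      hlt.le, fun _ => hlt⟩

end Game

/-- Suppose every Voronoi cell of Wilma's placement `W` in a compact convex board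
`Q` of positive area is point symmetric about some point. If some site `w` is not
the symmetry center of its own cell, then Barney wins: some `n`-point set `B ⊆ Q`
claims strictly more than half the area of `Q`. -/
theorem stmt_6 (Q : Set (EuclideanSpace ℝ (Fin 2))) (hQc : IsCompact Q) (hQconv : Convex ℝ Q)
    (hQvol : 0 < volume Q) (n : ℕ)
    (W : Set (EuclideanSpace ℝ (Fin 2))) (hWQ : W ⊆ Q) (hWfin : W.Finite)
    (hWne : W.Nonempty) (hWcard : W.ncard = n)
    (hsym : ∀ w ∈ W, ∃ c, PointSymmetricAbout (cell Q W w) c)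
    (hoff : ∃ w ∈ W, ∃ q, q ∈ cell Q W w ∧ (2 : ℝ) • w - q ∉ cell Q W w) :
    ∃ B : Set (EuclideanSpace ℝ (Fin 2)), B ⊆ Q ∧ B.Finite ∧ B.ncard = n ∧
      volume {q | q ∈ Q ∧ infDist q B < infDist q W} > volume Q / 2 := by
  obtain ⟨w₀, hw₀, q₀, hq₀, hq₀'⟩ := hoff
  choose! c hc using hsym
  have hc₀ : c w₀ ≠ w₀ := fun h => hq₀' ((h ▸ hc w₀ hw₀ q₀).1 hq₀)
  have hQfin : volume Q ≠ ∞ := hQc.measure_lt_top.ne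
  have hQinf : Q.Infinite := fun h => hQvol.ne' (h.measure_zero _)
  have hQint := hQconv.interior_nonempty_of_addHaar_pos volume hQvol
  choose! b L hbQ hL hle hlt using fun w hw => exists_tendsto_volume_claim_cell hQconv hQint
    hQinf.nontrivial hQfin hWfin (hWQ hw) (hc w hw)
  set F := hWfin.toFinset
  have hwin : volume Q / 2 < ∑ w ∈ F, L w := by
    refine ENNReal.div_lt_of_lt_mul' ?_
    calc volume Q ≤ ∑ w ∈ F, volume (cell Q W w) := volume_le_sum_volume_cell hWfin hWne
      _ < ∑ w ∈ F, 2 * L w := ENNReal.sum_lt_sum ?_ ?_ ?_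
      _ = 2 * ∑ w ∈ F, L w := (Finset.mul_sum ..).symm
    · exact ENNReal.sum_ne_top.2 fun w _ =>
        ne_top_of_le_ne_top hQfin (measure_mono (cell_subset Q W w))
    · exact fun w hw => hle w (hWfin.mem_toFinset.1 hw)
    · exact ⟨w₀, hWfin.mem_toFinset.2 hw₀, hlt w₀ hw₀ hc₀⟩
  obtain ⟨m, hm⟩ := ((tendsto_finsetSum F fun w hw =>
    hL w (hWfin.mem_toFinset.1 hw)).eventually_const_lt hwin).exists
  obtain ⟨B, hWB, hBQ, hBn⟩ := hQinf.exists_superset_ncard_eq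
    (image_subset_iff.2 fun w hw => hbQ w hw m) (hWfin.image _)
    ((ncard_image_le hWfin).trans hWcard.le)
  exact ⟨B, hBQ, finite_of_ncard_pos (hBn ▸ hWcard ▸ (ncard_pos hWfin).2 hWne), hBn,
    hm.trans_le (sum_volume_claim_le hQc.isClosed hWfin fun w hw => hWB (mem_image_of_mem _ hw))⟩
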